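/- arXiv:1505.05103 — 2 statements merged into one kernel-verified Lean document; each statement's English description precedes it below -/
import Mathlib

section
/- Let E, F be finite-dimensional complex vector spaces, let γ : E → F be a linear map, and let α : E → E and β : F → F be linear maps whose spectra are contained in Σ₁. Then γ ∘ exp(2πi·α) = exp(2πi·β) ∘ γ if and only if γ ∘ α = β ∘ γ. -/
open Complex

noncomputable section

/-- The set Σ: complex numbers `α` with `-1 ≤ Re α ≤ 0`, `Im α ≥ 0` if `Re α = -1`,
and `Im α < 0` if `Re α = 0`. -/
def SigmaSet : Set ℂ :=
  {α : ℂ | -1 ≤ α.re ∧ α.re ≤ 0 ∧ (α.re = -1 → 0 ≤ α.im) ∧ (α.re = 0 → α.im < 0)}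

/-- The set Σ₁ := Σ + 1. -/
def Sigma1 : Set ℂ := {α : ℂ | α - 1 ∈ SigmaSet}

/-- The constant `2πi`. -/
def twoPiI : ℂ := 2 * Real.pi * Complex.I

/-- The exponential `exp(2πi·f)` of an endomorphism `f`. -/
def expEnd {E : Type*} [NormedAddCommGroup E] [NormedSpace ℂ E] (f : E →L[ℂ] E) :
    E →L[ℂ] E :=
  NormedSpace.exp (twoPiI • f)

/-- The power series `ψ(A) := ∑_{k=1}^∞ ((2πi)^k / k!) A^(k-1)`. It satisfies
`A·ψ(A) = ψ(A)·A = exp(2πi·A) − Id`. -/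
def psiEnd {E : Type*} [NormedAddCommGroup E] [NormedSpace ℂ E] (A : E →L[ℂ] E) :
    E →L[ℂ] E :=
  ∑' k : ℕ, ((twoPiI ^ (k + 1) / (Nat.factorial (k + 1) : ℂ)) • A ^ k)

/-!
Let `R g = g ∘ α` and `L g = β ∘ g` on `E →L[ℂ] F`. They commute, so
`γ ∘ exp(2πiα) = exp(2πiβ) ∘ γ` says `exp(2πi(R - L)) γ = γ`. Now `exp(2πiz) - 1 = z ψ(z)` with
`ψ` entire and vanishing exactly at the nonzero integers, so this is equivalent to `(R - L) γ = 0`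
once `ψ(R - L)` is injective, i.e. once no nonzero integer `μ` is an eigenvalue of `R - L`
(`ψ(R - L)` commutes with `R - L`, so a nonzero kernel would contain an eigenvector). An
eigenvector `g` for `μ` intertwines `α - μ` and `β`; evaluating the minimal polynomial of `α - μ`
at `β` shows that they share an eigenvalue, so `μ = a - b` with `a ∈ σ(α)` and `b ∈ σ(β)`. Two
points of `Σ₁` never differ by a nonzero integer.
-/

open NormedSpace Module Module.End ContinuousLinearMap
open scoped Nat Pointwise

lemma twoPiI_ne_zero : twoPiI ≠ 0 := by
  simp [twoPiI, Real.pi_ne_zero, Complex.I_ne_zero]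

lemma eq_zero_of_sub_eq_intCast_of_mem_Sigma1 {a b : ℂ} {n : ℤ} (ha : a ∈ Sigma1)
    (hb : b ∈ Sigma1) (h : a - b = n) : n = 0 := by
  simp only [Sigma1, SigmaSet, Set.mem_ofPred_eq, sub_re, sub_im, one_re, one_im,
    sub_zero] at ha hb
  have hre : a.re - b.re = n := by simpa using congrArg re h
  have him : a.im = b.im := by simpa [sub_eq_zero] using congrArg im h
  have hlt : (n : ℝ) < 1 := by
    by_contra! hn
    linarith [ha.2.2.2 (by linarith), hb.2.2.1 (by linarith)]
  have hgt : -1 < (n : ℝ) := by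
    by_contra! hn
    linarith [hb.2.2.2 (by linarith), ha.2.2.1 (by linarith)]
  have : n < 1 := by exact_mod_cast hlt
  have : -1 < n := by exact_mod_cast hgt
  omega

section Sylvester

open Polynomial

variable {K V W : Type*} [Field K] [AddCommGroup V] [Module K V] [AddCommGroup W] [Module K W]

lemma LinearMap.comp_aeval_eq_aeval_comp {a : End K V} {b : End K W} {g : V →ₗ[K] W}
    (h : g ∘ₗ a = b ∘ₗ g) (p : K[X]) : g ∘ₗ aeval a p = aeval b p ∘ₗ g := by
  induction p using Polynomial.induction_on with
  | C c => ext x; simp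
  | add p q hp hq => simp only [map_add, LinearMap.comp_add, LinearMap.add_comp, hp, hq]
  | monomial n c ih =>
    rw [pow_succ, ← mul_assoc, map_mul (aeval a), map_mul (aeval b), aeval_X, aeval_X,
      mul_eq_comp, mul_eq_comp, ← LinearMap.comp_assoc, ih, LinearMap.comp_assoc, h,
      LinearMap.comp_assoc]

theorem exists_mem_spectrum_of_comp_eq_comp [IsAlgClosed K] [FiniteDimensional K V]
    {a : End K V} {b : End K W} {g : V →ₗ[K] W} (hg : g ≠ 0) (h : g ∘ₗ a = b ∘ₗ g) :
    ∃ r, r ∈ spectrum K a ∧ r ∈ spectrum K b := by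
  obtain ⟨x, hx⟩ : ∃ x, g x ≠ 0 := by
    by_contra! hgx
    exact hg (LinearMap.ext hgx)
  have : Nontrivial V := nontrivial_of_ne x 0 fun h0 => hx (h0 ▸ map_zero g)
  set p := minpoly K a
  have hpx : aeval b p (g x) = 0 := by
    rw [← LinearMap.comp_apply, ← LinearMap.comp_aeval_eq_aeval_comp h, minpoly.aeval,
      LinearMap.comp_zero, LinearMap.zero_apply]
  have hp0 : 0 ∈ spectrum K (aeval b p) := by
    rw [spectrum.zero_mem_iff, End.isUnit_iff]
    exact fun hbij => hx (hbij.injective (hpx.trans (map_zero _).symm))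
  rw [spectrum.map_polynomial_aeval_of_degree_pos b p
    (minpoly.degree_pos (Algebra.IsIntegral.isIntegral a))] at hp0
  obtain ⟨r, hr, hpr⟩ := hp0
  exact ⟨r, (hasEigenvalue_of_isRoot hpr).mem_spectrum, hr⟩

lemma Module.End.exists_hasEigenvector_mem_ker_of_commute [IsAlgClosed K]
    [FiniteDimensional K V] {f g : End K V} (hfg : Commute f g) (hg : LinearMap.ker g ≠ ⊥) :
    ∃ μ v, f.HasEigenvector μ v ∧ g v = 0 := by
  have hmaps : ∀ x ∈ LinearMap.ker g, f x ∈ LinearMap.ker g := fun x hx => by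
    rw [LinearMap.mem_ker] at hx ⊢
    rw [← mul_apply, ← hfg.eq, mul_apply, hx, map_zero]
  have := Submodule.nontrivial_iff_ne_bot.mpr hg
  obtain ⟨μ, hμ⟩ := exists_eigenvalue (f.restrict hmaps)
  obtain ⟨v, hv⟩ := hμ.exists_hasEigenvector
  refine ⟨μ, v, ⟨eigenspace_restrict_le_eigenspace f hmaps μ ⟨v, hv.1, rfl⟩, ?_⟩, v.2⟩
  exact fun h0 => hv.2 (Subtype.ext h0)

end Sylvester

section Psi

variable {𝔸 : Type*} [NormedRing 𝔸] [NormedAlgebra ℂ 𝔸]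

/-- `psiEnd` in an arbitrary Banach algebra, so that it also applies to scalars. -/
def psi (a : 𝔸) : 𝔸 :=
  ∑' k : ℕ, (twoPiI ^ (k + 1) / ((k + 1)! : ℂ)) • a ^ k

lemma commute_self_psi (a : 𝔸) : Commute a (psi a) :=
  .tsum_right a fun k => ((Commute.refl a).pow_right k).smul_right _

variable [CompleteSpace 𝔸]

lemma summable_psi (a : 𝔸) :
    Summable fun k : ℕ => (twoPiI ^ (k + 1) / ((k + 1)! : ℂ)) • a ^ k := by
  refine .of_norm_bounded ((norm_expSeries_summable' (𝕂 := ℂ) (twoPiI • a)).mul_left ‖twoPiI‖)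
    fun k => ?_
  have hfac : (k ! : ℝ) ≤ (k + 1)! := by exact_mod_cast Nat.factorial_le k.le_succ
  simp only [norm_smul, _root_.smul_pow, norm_div, norm_pow, norm_inv, Complex.norm_natCast]
  calc ‖twoPiI‖ ^ (k + 1) / ((k + 1)! : ℝ) * ‖a ^ k‖
      ≤ ‖twoPiI‖ ^ (k + 1) * ‖a ^ k‖ / k ! := by
        rw [div_mul_eq_mul_div]
        gcongr
    _ = ‖twoPiI‖ * ((k ! : ℝ)⁻¹ * (‖twoPiI‖ ^ k * ‖a ^ k‖)) := by ring

lemma hasSum_psi (a : 𝔸) :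
    HasSum (fun k : ℕ => (twoPiI ^ (k + 1) / ((k + 1)! : ℂ)) • a ^ k) (psi a) :=
  (summable_psi a).hasSum

lemma self_mul_psi (a : 𝔸) : a * psi a = exp (twoPiI • a) - 1 := by
  have hexp := (hasSum_nat_add_iff' 1).mpr (exp_series_hasSum_exp' (𝕂 := ℂ) (twoPiI • a))
  simp only [Finset.sum_range_one, pow_zero, Nat.factorial_zero, Nat.cast_one, inv_one,
    one_smul] at hexp
  have hterms : (fun k : ℕ => ((k + 1)! : ℂ)⁻¹ • (twoPiI • a) ^ (k + 1)) =
      fun k => a * ((twoPiI ^ (k + 1) / ((k + 1)! : ℂ)) • a ^ k) := by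
    funext k
    rw [mul_smul_comm, ← pow_succ', _root_.smul_pow, smul_smul, div_eq_inv_mul]
  exact ((hasSum_psi a).mul_left a).unique (hterms ▸ hexp)

lemma psi_mul_self (a : 𝔸) : psi a * a = exp (twoPiI • a) - 1 :=
  (commute_self_psi a).eq ▸ self_mul_psi a

end Psi

lemma psi_zero : psi (0 : ℂ) = twoPiI := by
  rw [psi, tsum_eq_single 0 fun k hk => by rw [zero_pow hk, smul_zero]]
  simp

lemma exists_intCast_of_psi_eq_zero {μ : ℂ} (h : psi μ = 0) : ∃ n : ℤ, n ≠ 0 ∧ μ = n := by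
  have hμ : μ ≠ 0 := by
    rintro rfl
    exact twoPiI_ne_zero (psi_zero ▸ h)
  have hexp : Complex.exp (twoPiI * μ) = 1 := by
    have := self_mul_psi μ
    rwa [h, mul_zero, eq_comm, sub_eq_zero, smul_eq_mul, ← Complex.exp_eq_exp_ℂ] at this
  obtain ⟨n, hn⟩ := Complex.exp_eq_one_iff.mp hexp
  have hμn : μ = n := mul_left_cancel₀ twoPiI_ne_zero (by rw [hn, twoPiI]; ring)
  refine ⟨n, ?_, hμn⟩
  rintro rfl
  exact hμ (by simpa using hμn)

section Operators

variable {G : Type*} [NormedAddCommGroup G] [NormedSpace ℂ G]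

lemma psi_apply_of_hasEigenvector [CompleteSpace G] {A : G →L[ℂ] G} {μ : ℂ} {v : G}
    (hv : HasEigenvector (A : G →ₗ[ℂ] G) μ v) : psi A v = psi μ • v := by
  have hA := (hasSum_psi A).mapL (apply ℂ G v)
  have hpow (k : ℕ) : (A ^ k) v = μ ^ k • v := by
    rw [← coe_coe, toLinearMap_pow, hv.pow_apply]
  simp only [apply_apply, smul_apply, hpow, smul_smul] at hA
  exact hA.unique ((hasSum_psi μ).smul_const v)

lemma expEnd_apply_eq_iff_of_commute [CompleteSpace G] {S T : G →L[ℂ] G} (h : Commute S T)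
    (x : G) : expEnd T x = expEnd S x ↔ expEnd (T - S) x = x := by
  let +nondep : NormedAlgebra ℚ (G →L[ℂ] G) := .restrictScalars ℚ ℂ _
  have hsplit : expEnd T = expEnd S * expEnd (T - S) := by
    rw [expEnd, expEnd, expEnd, ← exp_add_of_commute
      (((h.sub_right (Commute.refl S)).smul_left twoPiI).smul_right twoPiI), ← smul_add,
      add_sub_cancel]
  have hinj : Function.Injective (expEnd S) :=
    (isUnit_iff_bijective.mp (isUnit_exp _)).injective
  rw [hsplit, mul_apply_eq_comp, hinj.eq_iff]

variable [FiniteDimensional ℂ G]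

lemma psi_injective {A : G →L[ℂ] G} (hA : ∀ n : ℤ, n ≠ 0 → (n : ℂ) ∉ spectrum ℂ A) :
    Function.Injective ⇑(psi A) := by
  rw [← coe_coe, ← LinearMap.ker_eq_bot]
  by_contra hker
  obtain ⟨μ, v, hv, hψv⟩ :=
    exists_hasEigenvector_mem_ker_of_commute ((commute_self_psi A).map toLinearMapRingHom) hker
  have hψμ : psi μ = 0 :=
    (smul_eq_zero.mp ((psi_apply_of_hasEigenvector hv).symm.trans hψv)).resolve_right hv.2
  obtain ⟨n, hn, rfl⟩ := exists_intCast_of_psi_eq_zero hψμ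
  exact hA n hn (spectrum_eq (f := A) ▸ (hasEigenvalue_of_hasEigenvector hv).mem_spectrum)

lemma expEnd_apply_eq_self_iff {A : G →L[ℂ] G} (hA : ∀ n : ℤ, n ≠ 0 → (n : ℂ) ∉ spectrum ℂ A)
    (x : G) : expEnd A x = x ↔ A x = 0 := by
  have hexp : expEnd A x = x + psi A (A x) := by
    have : expEnd A = 1 + psi A * A := eq_add_of_sub_eq' (psi_mul_self A).symm
    rw [this]
    rfl
  rw [hexp, add_eq_left, map_eq_zero_iff _ (psi_injective hA)]

end Operators

lemma map_exp_eq_map_exp {𝔸 𝔹 M : Type*} [NormedRing 𝔸] [NormedAlgebra ℂ 𝔸] [CompleteSpace 𝔸]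
    [NormedRing 𝔹] [NormedAlgebra ℂ 𝔹] [CompleteSpace 𝔹] [NormedAddCommGroup M] [NormedSpace ℂ M]
    {u : 𝔸 →L[ℂ] M} {v : 𝔹 →L[ℂ] M} {a : 𝔸} {b : 𝔹} (h : ∀ n, u (a ^ n) = v (b ^ n)) :
    u (exp a) = v (exp b) := by
  rw [congrFun (exp_eq_tsum ℂ) a, congrFun (exp_eq_tsum ℂ) b, u.map_tsum (expSeries_summable' a),
    v.map_tsum (expSeries_summable' b)]
  simp only [map_smul, h]

section Composition

variable {E F : Type*} [NormedAddCommGroup E] [NormedSpace ℂ E] [NormedAddCommGroup F]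
  [NormedSpace ℂ F]

lemma flip_compL_pow_apply (α : E →L[ℂ] E) (n : ℕ) (g : E →L[ℂ] F) :
    ((compL ℂ E E F).flip α ^ n) g = g.comp (α ^ n) := by
  induction n with
  | zero => rfl
  | succ n ih => rw [pow_succ', mul_apply_eq_comp, ih, pow_succ]; rfl

lemma compL_pow_apply (β : F →L[ℂ] F) (n : ℕ) (g : E →L[ℂ] F) :
    (compL ℂ E F F β ^ n) g = (β ^ n).comp g := by
  induction n with
  | zero => rfl
  | succ n ih => rw [pow_succ', mul_apply_eq_comp, ih, pow_succ']; rfl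

lemma expEnd_flip_compL_apply [CompleteSpace E] [CompleteSpace F] (α : E →L[ℂ] E) (g : E →L[ℂ] F) :
    expEnd ((compL ℂ E E F).flip α) g = g.comp (expEnd α) := by
  rw [expEnd, expEnd, ← map_smul]
  exact map_exp_eq_map_exp (a := (compL ℂ E E F).flip (twoPiI • α)) (u := apply ℂ (E →L[ℂ] F) g)
    (v := compL ℂ E E F g) (flip_compL_pow_apply _ · g)

lemma expEnd_compL_apply [CompleteSpace F] (β : F →L[ℂ] F) (g : E →L[ℂ] F) :
    expEnd (compL ℂ E F F β) g = (expEnd β).comp g := by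
  rw [expEnd, expEnd, ← map_smul]
  exact map_exp_eq_map_exp (a := compL ℂ E F F (twoPiI • β)) (u := apply ℂ (E →L[ℂ] F) g)
    (v := (compL ℂ E F F).flip g) (compL_pow_apply _ · g)

lemma spectrum_flip_compL_sub_compL_subset [FiniteDimensional ℂ E] [FiniteDimensional ℂ F]
    (α : E →L[ℂ] E) (β : F →L[ℂ] F) :
    spectrum ℂ ((compL ℂ E E F).flip α - compL ℂ E F F β) ⊆ spectrum ℂ α - spectrum ℂ β := by
  intro μ hμ
  rw [spectrum_eq, ← hasEigenvalue_iff_mem_spectrum] at hμ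
  obtain ⟨g, hg⟩ := hμ.exists_hasEigenvector
  have hgμ : g.comp α - β.comp g = μ • g := hg.apply_eq_smul
  have hcomm : g.comp (α - algebraMap ℂ _ μ) = β.comp g := by
    rw [comp_sub, Algebra.algebraMap_eq_smul_one, comp_smul, one_def, comp_id, ← sub_eq_zero, ← hgμ]
    abel
  obtain ⟨r, hrα, hrβ⟩ := exists_mem_spectrum_of_comp_eq_comp
    (a := ((α - algebraMap ℂ _ μ : E →L[ℂ] E) : E →ₗ[ℂ] E)) (g := (g : E →ₗ[ℂ] F))
    (coe_injective.ne hg.2)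
    (by rw [← toLinearMap_comp, hcomm, toLinearMap_comp])
  rw [← spectrum_eq, ← spectrum.sub_singleton_eq] at hrα
  rw [← spectrum_eq] at hrβ
  obtain ⟨a, ha, m, hm, hr⟩ := hrα
  rw [Set.mem_singleton_iff] at hm
  exact ⟨a, ha, r, hrβ, by simp [← hr, hm]⟩

end Composition

/-- Corollary: for `γ : E → F` linear and endomorphisms `α`, `β` with spectra in Σ₁,
`γ ∘ exp(2πi·α) = exp(2πi·β) ∘ γ` iff `γ ∘ α = β ∘ γ`. -/
theorem comp_expEnd_eq_expEnd_comp_iff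
    {E F : Type*} [NormedAddCommGroup E] [NormedSpace ℂ E] [FiniteDimensional ℂ E]
    [NormedAddCommGroup F] [NormedSpace ℂ F] [FiniteDimensional ℂ F]
    (γ : E →L[ℂ] F) (α : E →L[ℂ] E) (β : F →L[ℂ] F)
    (hα : spectrum ℂ α ⊆ Sigma1) (hβ : spectrum ℂ β ⊆ Sigma1) :
    γ.comp (expEnd α) = (expEnd β).comp γ ↔ γ.comp α = β.comp γ := by
  set R := (compL ℂ E E F).flip α
  set L := compL ℂ E F F β
  have hLR : Commute L R := ContinuousLinearMap.ext fun _ => rfl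
  have hRL : ∀ n : ℤ, n ≠ 0 → (n : ℂ) ∉ spectrum ℂ (R - L) := fun n hn hmem => by
    obtain ⟨a, ha, b, hb, hab⟩ := spectrum_flip_compL_sub_compL_subset α β hmem
    exact hn (eq_zero_of_sub_eq_intCast_of_mem_Sigma1 (hα ha) (hβ hb) hab)
  rw [← expEnd_flip_compL_apply, ← expEnd_compL_apply, expEnd_apply_eq_iff_of_commute hLR,
    expEnd_apply_eq_self_iff hRL, sub_apply, sub_eq_zero]
  rfl
end
end

section
/- Let (V_I, u_{I,i}, c_{I,i}) be an object of 𝒬ui_n^{Σ₁}, i.e. a finite hypercube quiver representation over ℂ whose maps satisfy the commutativity conditions and such that the spectra of u_{I,i} ∘ c_{I,i} and c_{I,i} ∘ u_{I,i} are contained in Σ₁. Define y_{I,i} := ψ(c_{I,i} ∘ u_{I,i}) ∘ c_{I,i} = c_{I,i} ∘ ψ(u_{I,i} ∘ c_{I,i}). Then (V_I, u_{I,i}, y_{I,i}) is an object of 𝒞_n: the maps satisfy the same commutativity conditions, and u_{I,i} ∘ y_{I,i} + Id and y_{I,i} ∘ u_{I,i} + Id are invertible for all I and all i ∉ I. -/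
open Complex

noncomputable section

/-- Transport along an equality of index sets. -/
def castMap (V : Finset (Fin n) → Type*) [∀ I, NormedAddCommGroup (V I)]
    [∀ I, NormedSpace ℂ (V I)] {I J : Finset (Fin n)} (h : I = J) : V I →L[ℂ] V J := by
  subst h; exact ContinuousLinearMap.id ℂ (V I)

variable {n : ℕ}

/-- The data `(V_I, u_{I,i}, y_{I,i})` is a representation of the hypercube quiver:
the commutativity conditions
`u_{I∪{i},j} ∘ u_{I,i} = u_{I∪{j},i} ∘ u_{I,j}`,
`y_{I,i} ∘ y_{I∪{i},j} = y_{I,j} ∘ y_{I∪{j},i}` and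
`y_{I∪{i},j} ∘ u_{I∪{j},i} = u_{I,i} ∘ y_{I,j}` hold for all `i ≠ j` not in `I`. -/
def IsQuiRep (V : Finset (Fin n) → Type*) [∀ I, NormedAddCommGroup (V I)]
    [∀ I, NormedSpace ℂ (V I)]
    (u : ∀ (I : Finset (Fin n)) (i : Fin n), V I →L[ℂ] V (insert i I))
    (y : ∀ (I : Finset (Fin n)) (i : Fin n), V (insert i I) →L[ℂ] V I) : Prop :=
  ∀ (I : Finset (Fin n)) (i j : Fin n), i ∉ I → j ∉ I → i ≠ j →
    ((castMap V (Finset.insert_comm j i I)).comp ((u (insert i I) j).comp (u I i)) =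
      (u (insert j I) i).comp (u I j)) ∧
    ((y I i).comp (y (insert i I) j) =
      ((y I j).comp (y (insert j I) i)).comp (castMap V (Finset.insert_comm j i I))) ∧
    ((y (insert i I) j).comp ((castMap V (Finset.insert_comm i j I)).comp (u (insert j I) i)) =
      (u I i).comp (y I j))

/-- `(V_I, u_{I,i}, y_{I,i})` is an object of the category `𝒞_n`. -/
def IsCnObj (V : Finset (Fin n) → Type*) [∀ I, NormedAddCommGroup (V I)]
    [∀ I, NormedSpace ℂ (V I)]
    (u : ∀ (I : Finset (Fin n)) (i : Fin n), V I →L[ℂ] V (insert i I))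
    (y : ∀ (I : Finset (Fin n)) (i : Fin n), V (insert i I) →L[ℂ] V I) : Prop :=
  IsQuiRep V u y ∧ ∀ (I : Finset (Fin n)) (i : Fin n), i ∉ I →
    IsUnit ((u I i).comp (y I i) + ContinuousLinearMap.id ℂ (V (insert i I))) ∧
    IsUnit ((y I i).comp (u I i) + ContinuousLinearMap.id ℂ (V I))

/-- `(V_I, u_{I,i}, y_{I,i})` is an object of the category `𝒬ui_n^{Σ₁}`. -/
def IsQuiSigmaObj (V : Finset (Fin n) → Type*) [∀ I, NormedAddCommGroup (V I)]
    [∀ I, NormedSpace ℂ (V I)]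
    (u : ∀ (I : Finset (Fin n)) (i : Fin n), V I →L[ℂ] V (insert i I))
    (y : ∀ (I : Finset (Fin n)) (i : Fin n), V (insert i I) →L[ℂ] V I) : Prop :=
  IsQuiRep V u y ∧ ∀ (I : Finset (Fin n)) (i : Fin n), i ∉ I →
    spectrum ℂ ((u I i).comp (y I i)) ⊆ Sigma1 ∧
    spectrum ℂ ((y I i).comp (u I i)) ⊆ Sigma1

/-!
Since `A ψ(A) + 1 = exp(2πi A)`, both `u ∘ y + 1 = exp(2πi (u c))` and
`y ∘ u + 1 = exp(2πi (c u))` are invertible. The relations transfer because `ψ(A)` is a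
convergent power series in `A`: a map intertwining `A` with `A'` intertwines `ψ(A)` with `ψ(A')`.
The relations for `(u, c)` show that `u_{I,i}` and `c_{I,i}` intertwine the loops `c_{·,j} u_{·,j}`
at the two ends of the edge, and that the loops at `I` in directions `i` and `j` commute; this
moves the `ψ` factors past the `c`s and the `u`s.
-/

open ContinuousLinearMap

section Psi

variable {E F : Type*} [NormedAddCommGroup E] [NormedSpace ℂ E] [NormedAddCommGroup F]
  [NormedSpace ℂ F]

lemma norm_twoPiI : ‖twoPiI‖ = 2 * Real.pi := by
  simp [twoPiI, Real.pi_nonneg, abs_of_nonneg]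

lemma comp_pow_eq_pow_comp {A : E →L[ℂ] E} {A' : F →L[ℂ] F} {B : E →L[ℂ] F}
    (h : B.comp A = A'.comp B) (k : ℕ) : B.comp (A ^ k) = (A' ^ k).comp B := by
  induction k with
  | zero => rfl
  | succ k ih => rw [pow_succ, pow_succ, mul_def, mul_def, ← comp_assoc, ih, comp_assoc, h,
      ← comp_assoc]

variable [CompleteSpace E]

lemma summable_psiEnd (A : E →L[ℂ] E) :
    Summable (fun k : ℕ => (twoPiI ^ (k + 1) / ((k + 1).factorial : ℂ)) • A ^ k) := by
  refine .of_norm_bounded ((NormedSpace.norm_expSeries_summable' (𝕂 := ℂ) (twoPiI • A)).mul_left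
    (2 * Real.pi)) fun k => ?_
  -- the `k`-th term of `ψ(A)` is `2πi/(k+1)` times the `k`-th term of `exp(2πi·A)`
  have hterm : (twoPiI ^ (k + 1) / ((k + 1).factorial : ℂ)) • A ^ k =
      (twoPiI / (k + 1)) • ((k.factorial : ℂ)⁻¹ • (twoPiI • A) ^ k) := by
    rw [smul_pow, smul_smul, smul_smul, Nat.factorial_succ]
    congr 1
    push_cast
    field_simp
    ring
  have hk : (1 : ℝ) ≤ ‖(k : ℂ) + 1‖ := by
    rw [← Nat.cast_succ, Complex.norm_natCast]
    exact_mod_cast Nat.succ_pos k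
  have hcoeff : ‖twoPiI / (k + 1)‖ ≤ 2 * Real.pi := by
    rw [norm_div, norm_twoPiI, div_le_iff₀ (by linarith)]
    nlinarith [Real.pi_pos]
  rw [hterm, norm_smul]
  gcongr

lemma comp_psiEnd_eq_psiEnd_comp [CompleteSpace F] {A : E →L[ℂ] E} {A' : F →L[ℂ] F}
    {B : E →L[ℂ] F} (h : B.comp A = A'.comp B) : B.comp (psiEnd A) = (psiEnd A').comp B := by
  have hB := (compL ℂ E E F B).map_tsum (summable_psiEnd A)
  have hB' := ((compL ℂ E F F).flip B).map_tsum (summable_psiEnd A')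
  simp only [compL_apply, flip_apply] at hB hB'
  rw [psiEnd, psiEnd, hB, hB']
  refine tsum_congr fun k => ?_
  rw [comp_smul, smul_comp, comp_pow_eq_pow_comp h]

lemma Commute.psiEnd_left {A B : E →L[ℂ] E} (h : Commute A B) : Commute (psiEnd A) B :=
  (comp_psiEnd_eq_psiEnd_comp h.symm.eq).symm

lemma Commute.psiEnd_psiEnd {A B : E →L[ℂ] E} (h : Commute A B) :
    Commute (psiEnd A) (psiEnd B) :=
  (h.psiEnd_left.symm.psiEnd_left).symm

lemma mul_psiEnd_add_one (A : E →L[ℂ] E) : A * psiEnd A + 1 = expEnd A := by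
  rw [expEnd, NormedSpace.exp_eq_tsum ℂ (𝔸 := E →L[ℂ] E)]
  beta_reduce
  rw [(NormedSpace.expSeries_summable' (𝕂 := ℂ) (twoPiI • A)).tsum_eq_zero_add, add_comm,
    psiEnd, ← (summable_psiEnd A).tsum_mul_left A]
  congr 1
  · simp
  · refine tsum_congr fun k => ?_
    rw [mul_smul_comm, ← pow_succ', smul_pow, smul_smul, div_eq_mul_inv, mul_comm]

lemma isUnit_mul_psiEnd_add_one (A : E →L[ℂ] E) : IsUnit (A * psiEnd A + 1) :=
  mul_psiEnd_add_one A ▸ NormedSpace.isUnit_exp_of_mem_ball (𝕂 := ℂ)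
    ((NormedSpace.expSeries_radius_eq_top ℂ (E →L[ℂ] E)).symm ▸ edist_lt_top _ _)

lemma isUnit_psiEnd_mul_add_one (A : E →L[ℂ] E) : IsUnit (psiEnd A * A + 1) :=
  (Commute.refl A).psiEnd_left.eq ▸ isUnit_mul_psiEnd_add_one A

lemma isUnit_comp_psiEnd_comp_add_id [CompleteSpace F] (u : E →L[ℂ] F) (c : F →L[ℂ] E) :
    IsUnit (u.comp ((psiEnd (c.comp u)).comp c) + ContinuousLinearMap.id ℂ F) := by
  rw [← comp_psiEnd_eq_psiEnd_comp (B := c) (A := u.comp c) rfl]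
  exact isUnit_mul_psiEnd_add_one (u.comp c)

lemma isUnit_psiEnd_comp_comp_add_id (u : E →L[ℂ] F) (c : F →L[ℂ] E) :
    IsUnit (((psiEnd (c.comp u)).comp c).comp u + ContinuousLinearMap.id ℂ E) :=
  isUnit_psiEnd_mul_add_one (c.comp u)

end Psi

namespace IsQuiRep

variable {V : Finset (Fin n) → Type*} [∀ I, NormedAddCommGroup (V I)]
  [∀ I, NormedSpace ℂ (V I)] {u : ∀ (I : Finset (Fin n)) (i : Fin n), V I →L[ℂ] V (insert i I)}
  {c : ∀ (I : Finset (Fin n)) (i : Fin n), V (insert i I) →L[ℂ] V I}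
  {I : Finset (Fin n)} {i j : Fin n}

lemma cu_comp_u (hrep : IsQuiRep V u c) (hi : i ∉ I) (hj : j ∉ I) (hij : i ≠ j) :
    ((c (insert i I) j).comp (u (insert i I) j)).comp (u I i) =
      (u I i).comp ((c I j).comp (u I j)) := by
  have hu := (hrep I j i hj hi hij.symm).1
  have hcu := (hrep I i j hi hj hij).2.2
  rw [comp_assoc, ← hu, ← comp_assoc, ← comp_assoc, comp_assoc _ (castMap _ _), hcu, comp_assoc]

lemma c_comp_cu (hrep : IsQuiRep V u c) (hi : i ∉ I) (hj : j ∉ I) (hij : i ≠ j) :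
    (c I i).comp ((c (insert i I) j).comp (u (insert i I) j)) =
      ((c I j).comp (u I j)).comp (c I i) := by
  have hc := (hrep I i j hi hj hij).2.1
  have hcu := (hrep I j i hj hi hij.symm).2.2
  rw [← comp_assoc, hc, comp_assoc, comp_assoc, hcu, comp_assoc]

lemma commute_cu (hrep : IsQuiRep V u c) (hi : i ∉ I) (hj : j ∉ I) (hij : i ≠ j) :
    Commute ((c I i).comp (u I i)) ((c I j).comp (u I j)) := by
  change ((c I i).comp (u I i)).comp ((c I j).comp (u I j)) =
    ((c I j).comp (u I j)).comp ((c I i).comp (u I i))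
  rw [comp_assoc, ← hrep.cu_comp_u hi hj hij, ← comp_assoc, hrep.c_comp_cu hi hj hij, comp_assoc]

lemma psiEnd_comp [∀ I, CompleteSpace (V I)] (hrep : IsQuiRep V u c) :
    IsQuiRep V u (fun I i => (psiEnd ((c I i).comp (u I i))).comp (c I i)) := by
  intro I i j hi hj hij
  obtain ⟨hu, hc, hcu⟩ := hrep I i j hi hj hij
  have hψi := comp_psiEnd_eq_psiEnd_comp (hrep.c_comp_cu hi hj hij)
  have hψj := comp_psiEnd_eq_psiEnd_comp (hrep.c_comp_cu hj hi hij.symm)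
  have hψu := comp_psiEnd_eq_psiEnd_comp (hrep.cu_comp_u hi hj hij).symm
  have hψψ := (hrep.commute_cu hi hj hij).psiEnd_psiEnd.eq
  simp only [ContinuousLinearMap.ext_iff, comp_apply, mul_apply_eq_comp] at hc hcu hψi hψj hψu hψψ
  refine ⟨hu, ?_, ?_⟩ <;> ext x <;> simp only [comp_apply]
  · rw [hψi, hψj, hc, hψψ]
  · rw [hcu, hψu]

end IsQuiRep

/-- If `(V_I, u_{I,i}, c_{I,i})` is an object of `𝒬ui_n^{Σ₁}`, then setting
`y_{I,i} := ψ(c_{I,i} ∘ u_{I,i}) ∘ c_{I,i} = c_{I,i} ∘ ψ(u_{I,i} ∘ c_{I,i})`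
yields an object `(V_I, u_{I,i}, y_{I,i})` of `𝒞_n`. -/
theorem Q_well_defined {n : ℕ} (V : Finset (Fin n) → Type*)
    [∀ I, NormedAddCommGroup (V I)] [∀ I, NormedSpace ℂ (V I)]
    [∀ I, FiniteDimensional ℂ (V I)]
    (u : ∀ (I : Finset (Fin n)) (i : Fin n), V I →L[ℂ] V (insert i I))
    (c : ∀ (I : Finset (Fin n)) (i : Fin n), V (insert i I) →L[ℂ] V I)
    (h : IsQuiSigmaObj V u c) :
    (∀ (I : Finset (Fin n)) (i : Fin n),
      (psiEnd ((c I i).comp (u I i))).comp (c I i) =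
        (c I i).comp (psiEnd ((u I i).comp (c I i)))) ∧
    IsCnObj V u (fun I i => (psiEnd ((c I i).comp (u I i))).comp (c I i)) := by
  have : ∀ I, CompleteSpace (V I) := fun I => FiniteDimensional.complete ℂ (V I)
  refine ⟨fun I i => (comp_psiEnd_eq_psiEnd_comp (B := c I i) rfl).symm, h.1.psiEnd_comp,
    fun I i _ => ⟨?_, ?_⟩⟩
  · exact isUnit_comp_psiEnd_comp_add_id (u I i) (c I i)
  · exact isUnit_psiEnd_comp_comp_add_id (u I i) (c I i)
end
end
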